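/- arXiv:cs/0702154 — 8 statements merged into one kernel-verified Lean document; each statement's English description precedes it below -/
import Mathlib

section
/- Let T ≥ 3, let R = {2, …, T−1}, and fix positive reals P1, N_j > 0 for j ∈ {2, …, T}, and λ_{ij} > 0 for all i ∈ {1} ∪ R, j ∈ {2, …, T}, i ≠ j. For Q = (Q_i)_{i∈R} with Q_i > 0 and nonempty S ⊆ R, let Λ_S(Q) be the determinant of the |S|×|S| matrix with (s,s′) entry √(λ_{1s}λ_{1s′})·P1 + δ_{ss′}·(N_s + Q_s); define R(Q) = (1/2)·log(1 + ∑_{i∈R} λ_{1i}P1/(N_i + Q_i) + λ_{1T}P1/N_T) and C* = (1/2)·log(1 + ∑_{i∈R} λ_{1i}P1/N_i + λ_{1T}P1/N_T). Then for every δ > 0 there exists P0 > 0 such that for all relay powers (P_i)_{i∈R} with P_i ≥ P0 for every i ∈ R, there exists Q with Q_i > 0 for all i ∈ R satisfying simultaneously: (a) for every nonempty S ⊆ R, every partition {B_1,…,B_M} of S, and every choice r(m) ∈ {2,…,T} \ B_m, one has ∏_{s∈S} Q_s ≥ Λ_S(Q) / ∏_{m=1}^{M} [1 + (∑_{i∈B_m,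 i≠r(m)} λ_{i r(m)} P_i)/(λ_{1 r(m)} P1 + N_{r(m)})]; and (b) R(Q) ≥ C* − δ. -/
set_option maxHeartbeats 2000000


/-- For the `T`-node Gaussian SSMRSD mesh network, for every `δ > 0`
there is `P0 > 0` such that whenever all relay powers satisfy `P_i ≥ P0`, there exist
quantization noises `Q_i > 0` satisfying all the compress-and-forward constraints
`∏_{s∈S} Q_s ≥ Λ_S(Q)/∏_m [1 + (∑_{i∈B_m, i≠r(m)} λ_{i r(m)} P_i)/(λ_{1 r(m)} P1 + N_{r(m)})]`
(for every nonempty `S ⊆ R`, partition of `S` and receiver choice `r`), and such that the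
compress-and-forward rate `R(Q)` is within `δ` of the cut-set bound `C*`. -/
theorem stmt6 (T : ℕ) (hT : 3 ≤ T)
    (P1 : ℝ) (hP1 : 0 < P1)
    (N : ℕ → ℝ) (hN : ∀ j ∈ Finset.Icc 2 T, 0 < N j)
    (lam : ℕ → ℕ → ℝ)
    (hlam : ∀ i ∈ insert 1 (Finset.Icc 2 (T - 1)), ∀ j ∈ Finset.Icc 2 T,
      i ≠ j → 0 < lam i j) :
    ∀ δ > (0 : ℝ), ∃ P0 > (0 : ℝ), ∀ P : ℕ → ℝ,
      (∀ i ∈ Finset.Icc 2 (T - 1), P0 ≤ P i) →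
      ∃ Q : ℕ → ℝ, (∀ i ∈ Finset.Icc 2 (T - 1), 0 < Q i) ∧
        (∀ S : Finset ℕ, S ⊆ Finset.Icc 2 (T - 1) → S.Nonempty →
          ∀ (M : ℕ) (B : Fin M → Finset ℕ),
            (∀ m, (B m).Nonempty) →
            (∀ m₁ m₂, m₁ ≠ m₂ → Disjoint (B m₁) (B m₂)) →
            Finset.univ.biUnion B = S →
            ∀ r : Fin M → ℕ, (∀ m, r m ∈ Finset.Icc 2 T \ B m) →
              (Matrix.det (Matrix.of fun s s' : {x // x ∈ S} =>
                  Real.sqrt (lam 1 (s : ℕ) * lam 1 (s' : ℕ)) * P1 +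
                    if s = s' then N (s : ℕ) + Q (s : ℕ) else 0)) /
                (∏ m : Fin M,
                  (1 + (∑ i ∈ (B m).erase (r m), lam i (r m) * P i) /
                    (lam 1 (r m) * P1 + N (r m))))
              ≤ ∏ s ∈ S, Q s) ∧
        (1 / 2) * Real.log (1 + (∑ i ∈ Finset.Icc 2 (T - 1), lam 1 i * P1 / (N i + Q i))
              + lam 1 T * P1 / N T)
          ≥ (1 / 2) * Real.log (1 + (∑ i ∈ Finset.Icc 2 (T - 1), lam 1 i * P1 / N i)
              + lam 1 T * P1 / N T) - δ := by
  intro δ hδ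
  have hTmem : T ∈ Finset.Icc 2 T := by simp [Finset.mem_Icc]; omega
  have h2mem : (2 : ℕ) ∈ Finset.Icc 2 (T - 1) := by simp [Finset.mem_Icc]; omega
  have hsub : Finset.Icc 2 (T - 1) ⊆ Finset.Icc 2 T := by
    intro i hi; simp only [Finset.mem_Icc] at *; omega
  have hNT : 0 < N T := hN T hTmem
  have hNi : ∀ i ∈ Finset.Icc 2 (T - 1), 0 < N i := fun i hi => hN i (hsub hi)
  have hlam1 : ∀ j ∈ Finset.Icc 2 T, 0 < lam 1 j := by
    intro j hj
    have hj2 : 2 ≤ j := (Finset.mem_Icc.1 hj).1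
    exact hlam 1 (Finset.mem_insert_self _ _) j hj (by omega)
  have hlamR : ∀ i ∈ Finset.Icc 2 (T - 1), ∀ j ∈ Finset.Icc 2 T, i ≠ j → 0 < lam i j :=
    fun i hi j hj hij => hlam i (Finset.mem_insert_of_mem hi) j hj hij
  -- the constant C
  obtain ⟨C, hCdef⟩ : ∃ x : ℝ, x = ∑ i ∈ Finset.Icc 2 (T - 1), lam 1 i * P1 / (N i) ^ 2 :=
    ⟨_, rfl⟩
  have hC0 : 0 ≤ C := by
    rw [hCdef]
    apply Finset.sum_nonneg
    intro i hi
    have := hlam1 i (hsub hi); have := hNi i hi; positivity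
  -- choice of ε
  obtain ⟨ε, hε0, hεC⟩ : ∃ ε : ℝ, 0 < ε ∧ ε * C ≤ δ := by
    refine ⟨δ / (1 + C), div_pos hδ (by linarith), ?_⟩
    rw [div_mul_eq_mul_div, div_le_iff₀ (by linarith)]
    nlinarith
  -- lmin
  obtain ⟨lmin, hlmin0, hlmin_le⟩ : ∃ l : ℝ, 0 < l ∧
      ∀ i ∈ Finset.Icc 2 (T - 1), ∀ j ∈ Finset.Icc 2 T, i ≠ j → l ≤ lam i j := by
    have hPne : ((Finset.Icc 2 (T - 1)) ×ˢ (Finset.Icc 2 T)).Nonempty :=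
      ⟨(2, T), Finset.mem_product.2 ⟨h2mem, hTmem⟩⟩
    refine ⟨((Finset.Icc 2 (T - 1)) ×ˢ (Finset.Icc 2 T)).inf' hPne
      (fun p => if p.1 = p.2 then 1 else lam p.1 p.2), ?_, ?_⟩
    · rw [Finset.lt_inf'_iff]
      intro p hp
      rw [Finset.mem_product] at hp
      by_cases h : p.1 = p.2
      · simp [h]
      · simpa [h] using hlamR p.1 hp.1 p.2 hp.2 h
    · intro i hi j hj hij
      have := Finset.inf'_le (f := fun p : ℕ × ℕ => if p.1 = p.2 then 1 else lam p.1 p.2)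
        (b := (i, j)) (Finset.mem_product.2 ⟨hi, hj⟩)
      simp only [if_neg hij] at this
      exact this
  -- Dmax
  obtain ⟨Dmax, hDmax0, hDmax_le⟩ : ∃ d : ℝ, 0 < d ∧
      ∀ j ∈ Finset.Icc 2 T, lam 1 j * P1 + N j ≤ d := by
    refine ⟨(Finset.Icc 2 T).sup' ⟨T, hTmem⟩ (fun j => lam 1 j * P1 + N j), ?_, ?_⟩
    · have h1 : 0 < lam 1 T * P1 + N T := by
        have := hlam1 T hTmem; positivity
      exact lt_of_lt_of_le h1
        (Finset.le_sup' (f := fun j => lam 1 j * P1 + N j) hTmem)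
    · intro j hj
      exact Finset.le_sup' (f := fun j => lam 1 j * P1 + N j) hj
  -- the uniform power threshold
  obtain ⟨P0', hP0'⟩ := Finset.exists_le (((Finset.Icc 2 (T - 1)).powerset).image
    (fun S => Dmax * (Matrix.det (Matrix.of fun s s' : {x // x ∈ S} =>
        Real.sqrt (lam 1 (s : ℕ) * lam 1 (s' : ℕ)) * P1 +
          if s = s' then N (s : ℕ) + ε else 0)) / (lmin * ∏ _s ∈ S, ε)))
  obtain ⟨P0, hP01, hP0big⟩ : ∃ P0 : ℝ, 1 ≤ P0 ∧ ∀ S ⊆ Finset.Icc 2 (T - 1),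
      Dmax * (Matrix.det (Matrix.of fun s s' : {x // x ∈ S} =>
          Real.sqrt (lam 1 (s : ℕ) * lam 1 (s' : ℕ)) * P1 +
            if s = s' then N (s : ℕ) + ε else 0)) / (lmin * ∏ _s ∈ S, ε) ≤ P0 :=
    ⟨max 1 P0', le_max_left _ _, fun S hS => le_trans
      (hP0' _ (Finset.mem_image_of_mem _ (Finset.mem_powerset.2 hS)))
      (le_max_right _ _)⟩
  refine ⟨P0, lt_of_lt_of_le one_pos hP01, ?_⟩
  intro P hP
  refine ⟨fun _ => ε, fun i _ => hε0, ?_, ?_⟩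
  · -- constraint (a)
    intro S hS hSne M B hBne hBdisj hBU r hr
    show (Matrix.det (Matrix.of fun s s' : {x // x ∈ S} =>
        Real.sqrt (lam 1 (s : ℕ) * lam 1 (s' : ℕ)) * P1 +
          if s = s' then N (s : ℕ) + ε else 0)) /
      (∏ m : Fin M, (1 + (∑ i ∈ (B m).erase (r m), lam i (r m) * P i) /
        (lam 1 (r m) * P1 + N (r m)))) ≤ ∏ _s ∈ S, ε
    have hM : 0 < M := by
      rcases hSne with ⟨x, hx⟩
      rw [← hBU, Finset.mem_biUnion] at hx
      rcases hx with ⟨m, _, _⟩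
      exact m.pos
    set m0 : Fin M := ⟨0, hM⟩ with hm0
    obtain ⟨i0, hi0⟩ := hBne m0
    have hrmem : ∀ m, r m ∈ Finset.Icc 2 T := fun m => (Finset.mem_sdiff.1 (hr m)).1
    have hrnot : ∀ m, r m ∉ B m := fun m => (Finset.mem_sdiff.1 (hr m)).2
    have hBS : ∀ m, ∀ i ∈ B m, i ∈ Finset.Icc 2 (T - 1) := by
      intro m i hi
      exact hS (hBU ▸ Finset.mem_biUnion.2 ⟨m, Finset.mem_univ _, hi⟩)
    have hden_pos : ∀ m : Fin M, 0 < lam 1 (r m) * P1 + N (r m) := by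
      intro m
      have h1 := hlam1 (r m) (hrmem m)
      have h2 := hN (r m) (hrmem m)
      positivity
    have hnum_nonneg : ∀ m : Fin M,
        0 ≤ ∑ i ∈ (B m).erase (r m), lam i (r m) * P i := by
      intro m
      apply Finset.sum_nonneg
      intro i hi
      have hi' := Finset.mem_erase.1 hi
      have hl := hlamR i (hBS m i hi'.2) (r m) (hrmem m) hi'.1
      have hPi : 1 ≤ P i := le_trans hP01 (hP i (hBS m i hi'.2))
      positivity
    have hf1 : ∀ m : Fin M,
        1 ≤ 1 + (∑ i ∈ (B m).erase (r m), lam i (r m) * P i) /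
          (lam 1 (r m) * P1 + N (r m)) := by
      intro m
      have := div_nonneg (hnum_nonneg m) (hden_pos m).le
      linarith
    -- bound on the factor m0
    have hi0R : i0 ∈ Finset.Icc 2 (T - 1) := hBS m0 i0 hi0
    have hi0ne : i0 ≠ r m0 := fun h => hrnot m0 (h ▸ hi0)
    have hi0erase : i0 ∈ (B m0).erase (r m0) := Finset.mem_erase.2 ⟨hi0ne, hi0⟩
    have hsum_ge : lmin * P0 ≤ ∑ i ∈ (B m0).erase (r m0), lam i (r m0) * P i := by
      have hterm : lmin * P0 ≤ lam i0 (r m0) * P i0 := by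
        have h1 := hlmin_le i0 hi0R (r m0) (hrmem m0) hi0ne
        have h2 := hP i0 hi0R
        have : (0:ℝ) ≤ P0 := le_trans zero_le_one hP01
        nlinarith
      refine le_trans hterm
        (Finset.single_le_sum (f := fun i => lam i (r m0) * P i) ?_ hi0erase)
      intro i hi
      have hi' := Finset.mem_erase.1 hi
      have hl := hlamR i (hBS m0 i hi'.2) (r m0) (hrmem m0) hi'.1
      have hPi : 1 ≤ P i := le_trans hP01 (hP i (hBS m0 i hi'.2))
      positivity
    have hfm0 : lmin * P0 / Dmax ≤
        (∑ i ∈ (B m0).erase (r m0), lam i (r m0) * P i) /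
          (lam 1 (r m0) * P1 + N (r m0)) :=
      div_le_div₀ (hnum_nonneg m0) hsum_ge (hden_pos m0) (hDmax_le (r m0) (hrmem m0))
    obtain ⟨D, hDdef⟩ : ∃ x : ℝ, x = ∏ m : Fin M,
        (1 + (∑ i ∈ (B m).erase (r m), lam i (r m) * P i) /
          (lam 1 (r m) * P1 + N (r m))) := ⟨_, rfl⟩
    have hone : (1:ℝ) ≤ ∏ m ∈ Finset.univ.erase m0,
        (1 + (∑ i ∈ (B m).erase (r m), lam i (r m) * P i) /
          (lam 1 (r m) * P1 + N (r m))) := by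
      have h := Finset.prod_le_prod (s := Finset.univ.erase m0) (f := fun _ => (1:ℝ))
        (g := fun m => 1 + (∑ i ∈ (B m).erase (r m), lam i (r m) * P i) /
          (lam 1 (r m) * P1 + N (r m)))
        (fun i _ => zero_le_one) (fun i _ => hf1 i)
      simpa using h
    have hfD : 1 + (∑ i ∈ (B m0).erase (r m0), lam i (r m0) * P i) /
        (lam 1 (r m0) * P1 + N (r m0)) ≤ D := by
      rw [hDdef, ← Finset.mul_prod_erase Finset.univ
        (f := fun m => 1 + (∑ i ∈ (B m).erase (r m), lam i (r m) * P i) /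
          (lam 1 (r m) * P1 + N (r m))) (Finset.mem_univ m0)]
      exact le_mul_of_one_le_right (le_trans zero_le_one (hf1 m0)) hone
    have hDx : lmin * P0 / Dmax ≤ D := by linarith
    have hlP0 : 0 < lmin * P0 / Dmax := by
      have : (0:ℝ) < P0 := lt_of_lt_of_le one_pos hP01
      positivity
    have hD0 : 0 < D := lt_of_lt_of_le hlP0 hDx
    rw [← hDdef, div_le_iff₀ hD0]
    have hprod : 0 < ∏ _s ∈ S, ε := Finset.prod_pos (fun _ _ => hε0)
    have hbig := hP0big S hS
    rw [div_le_iff₀ (by positivity)] at hbig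
    have h2 : lmin * P0 ≤ D * Dmax := by
      rw [div_le_iff₀ hDmax0] at hDx; linarith
    have h3 : Dmax * (Matrix.det (Matrix.of fun s s' : {x // x ∈ S} =>
        Real.sqrt (lam 1 (s : ℕ) * lam 1 (s' : ℕ)) * P1 +
          if s = s' then N (s : ℕ) + ε else 0)) ≤ Dmax * ((∏ _s ∈ S, ε) * D) := by
      nlinarith [mul_le_mul_of_nonneg_right h2 hprod.le]
    exact le_of_mul_le_mul_left h3 hDmax0
  · -- rate constraint (b)
    show (1 / 2) * Real.log (1 + (∑ i ∈ Finset.Icc 2 (T - 1), lam 1 i * P1 / (N i + ε))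
          + lam 1 T * P1 / N T)
      ≥ (1 / 2) * Real.log (1 + (∑ i ∈ Finset.Icc 2 (T - 1), lam 1 i * P1 / N i)
          + lam 1 T * P1 / N T) - δ
    obtain ⟨Sε, hSεdef⟩ : ∃ x : ℝ,
        x = ∑ i ∈ Finset.Icc 2 (T - 1), lam 1 i * P1 / (N i + ε) := ⟨_, rfl⟩
    obtain ⟨S0, hS0def⟩ : ∃ x : ℝ,
        x = ∑ i ∈ Finset.Icc 2 (T - 1), lam 1 i * P1 / N i := ⟨_, rfl⟩
    rw [← hSεdef, ← hS0def]
    have hSεS0 : Sε ≤ S0 := by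
      rw [hSεdef, hS0def]
      apply Finset.sum_le_sum
      intro i hi
      have h1 := hlam1 i (hsub hi)
      have h2 := hNi i hi
      exact div_le_div_of_nonneg_left (by positivity) h2 (by linarith)
    have hSε0 : 0 ≤ Sε := by
      rw [hSεdef]
      apply Finset.sum_nonneg
      intro i hi
      have h1 := hlam1 i (hsub hi)
      have h2 := hNi i hi
      positivity
    have ht0 : 0 < lam 1 T * P1 / N T := by
      have := hlam1 T hTmem; positivity
    have hdiff : S0 - Sε ≤ ε * C := by
      rw [hS0def, hSεdef, ← Finset.sum_sub_distrib, hCdef, Finset.mul_sum]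
      apply Finset.sum_le_sum
      intro i hi
      have h1 := hlam1 i (hsub hi)
      have h2 := hNi i hi
      rw [div_sub_div _ _ h2.ne' (by positivity), div_le_iff₀ (by positivity)]
      have hexp : ε * (lam 1 i * P1 / N i ^ 2) * (N i * (N i + ε))
          = lam 1 i * P1 * ε * (N i * (N i + ε)) / N i ^ 2 := by ring
      rw [hexp, le_div_iff₀ (by positivity)]
      nlinarith [mul_pos (mul_pos (mul_pos h1 hP1) hε0) (mul_pos h2 hε0)]
    have hAε1 : (1:ℝ) ≤ 1 + Sε + lam 1 T * P1 / N T := by linarith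
    have hAε0 : (0:ℝ) < 1 + Sε + lam 1 T * P1 / N T := by linarith
    have hA00 : (0:ℝ) < 1 + S0 + lam 1 T * P1 / N T := by linarith
    have hlog : Real.log (1 + S0 + lam 1 T * P1 / N T)
        - Real.log (1 + Sε + lam 1 T * P1 / N T) ≤ δ := by
      rw [← Real.log_div hA00.ne' hAε0.ne']
      have h1 : Real.log ((1 + S0 + lam 1 T * P1 / N T) / (1 + Sε + lam 1 T * P1 / N T))
          ≤ (1 + S0 + lam 1 T * P1 / N T) / (1 + Sε + lam 1 T * P1 / N T) - 1 :=
        Real.log_le_sub_one_of_pos (div_pos hA00 hAε0)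
      have h2 : (1 + S0 + lam 1 T * P1 / N T) / (1 + Sε + lam 1 T * P1 / N T) - 1
          ≤ S0 - Sε := by
        rw [div_sub_one hAε0.ne']
        have he : (1 + S0 + lam 1 T * P1 / N T) - (1 + Sε + lam 1 T * P1 / N T)
            = S0 - Sε := by ring
        rw [he]
        exact div_le_self (by linarith) hAε1
      linarith
    linarith
end

section
/- Let P1, λ12, λ13, λ23, N2, N3 be positive reals and define, for P2 > 0, R_CF(P2) = (1/2)·log(1 + P1·λ13/N3 + P1·P2·λ12·λ23/(P1·(λ13·N2 + λ12·N3) + P2·λ23·N2 + N2·N3)). Then: (a) R_CF is strictly increasing in P2 on (0, ∞); (b) R_CF(P2) < (1/2)·log(1 + P1·λ13/N3 + P1·λ12/N2) for every P2 > 0; and (c) R_CF(P2) → (1/2)·log(1 + P1·λ13/N3 + P1·λ12/N2) as P2 → ∞. -/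
/-!
With `a = P1λ12λ23`, `b = N2λ23` and `d = P1(λ13N2 + λ12N3) + N2N3`, the rate is
`(1/2)·log(1 + P1λ13/N3 + f P2)` for the Möbius map `f x = a x / (d + b x)`. Since `d > 0`,
`f` is strictly increasing on `[0, ∞)`, stays strictly below its horizontal asymptote
`a / b = P1λ12/N2` and tends to it; composing with the increasing, continuous map
`y ↦ (1/2)·log(1 + P1λ13/N3 + y)` gives all three claims.
-/

open Set Filter Topology

section MobiusMap

variable {a b d : ℝ}

theorem strictMonoOn_mul_div_add (ha : 0 < a) (hb : 0 ≤ b) (hd : 0 < d) :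
    StrictMonoOn (fun x => a * x / (d + b * x)) (Ici 0) := by
  intro x hx y hy hxy
  have hdx : 0 < d + b * x := by nlinarith [mem_Ici.mp hx]
  have hdy : 0 < d + b * y := by nlinarith [mem_Ici.mp hy]
  rw [div_lt_div_iff₀ hdx hdy]
  nlinarith [mul_pos (mul_pos ha hd) (sub_pos.mpr hxy)]

theorem mul_div_add_lt_div (ha : 0 < a) (hb : 0 < b) (hd : 0 < d) {x : ℝ} (hx : 0 ≤ x) :
    a * x / (d + b * x) < a / b := by
  rw [div_lt_div_iff₀ (by positivity) hb]
  nlinarith [mul_pos ha hd]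

theorem tendsto_mul_div_add_atTop (hb : 0 < b) :
    Tendsto (fun x => a * x / (d + b * x)) atTop (𝓝 (a / b)) := by
  have hden : Tendsto (fun x => d / x + b) atTop (𝓝 b) := by
    simpa using (tendsto_const_nhds.div_atTop tendsto_id).add (tendsto_const_nhds (x := b))
  refine (tendsto_const_nhds.div hden hb.ne').congr' ?_
  filter_upwards [eventually_gt_atTop 0] with x hx
  simp only [Pi.div_apply]
  rw [div_add' _ _ _ hx.ne', div_div_eq_mul_div, add_comm]

end MobiusMap

theorem strictMonoOn_half_mul_log_add {c : ℝ} (hc : 0 < c) :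
    StrictMonoOn (fun y => 1 / 2 * Real.log (c + y)) (Ici 0) := by
  intro x hx y _ hxy
  have hcx : 0 < c + x := by linarith [mem_Ici.mp hx]
  simpa using Real.log_lt_log hcx (by linarith : c + x < c + y)

/-- The compress-and-forward rate
`R_CF(P2) = (1/2)log(1 + P1λ13/N3 + P1P2λ12λ23/(P1(λ13N2 + λ12N3) + P2λ23N2 + N2N3))`
is strictly increasing in `P2` on `(0, ∞)`, is strictly below the broadcast cut-set
bound `(1/2)log(1 + P1λ13/N3 + P1λ12/N2)` for every `P2 > 0`, and converges to that
bound as `P2 → ∞`. -/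
theorem stmt7 (P1 lam12 lam13 lam23 N2 N3 : ℝ)
    (hP1 : 0 < P1) (hl12 : 0 < lam12) (hl13 : 0 < lam13) (hl23 : 0 < lam23)
    (hN2 : 0 < N2) (hN3 : 0 < N3) :
    StrictMonoOn (fun P2 : ℝ => (1 / 2) * Real.log (1 + P1 * lam13 / N3 +
        P1 * P2 * lam12 * lam23 /
          (P1 * (lam13 * N2 + lam12 * N3) + P2 * lam23 * N2 + N2 * N3)))
      (Set.Ioi 0) ∧
    (∀ P2 : ℝ, 0 < P2 →
      (1 / 2) * Real.log (1 + P1 * lam13 / N3 +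
          P1 * P2 * lam12 * lam23 /
            (P1 * (lam13 * N2 + lam12 * N3) + P2 * lam23 * N2 + N2 * N3))
        < (1 / 2) * Real.log (1 + P1 * lam13 / N3 + P1 * lam12 / N2)) ∧
    Filter.Tendsto (fun P2 : ℝ => (1 / 2) * Real.log (1 + P1 * lam13 / N3 +
        P1 * P2 * lam12 * lam23 /
          (P1 * (lam13 * N2 + lam12 * N3) + P2 * lam23 * N2 + N2 * N3)))
      Filter.atTop
      (nhds ((1 / 2) * Real.log (1 + P1 * lam13 / N3 + P1 * lam12 / N2))) := by
  have hform : ∀ P2 : ℝ, P1 * P2 * lam12 * lam23 /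
        (P1 * (lam13 * N2 + lam12 * N3) + P2 * lam23 * N2 + N2 * N3) =
      P1 * lam12 * lam23 * P2 / (P1 * (lam13 * N2 + lam12 * N3) + N2 * N3 + N2 * lam23 * P2) :=
    fun P2 => by ring
  have hasymptote : P1 * lam12 / N2 = P1 * lam12 * lam23 / (N2 * lam23) :=
    (mul_div_mul_right _ _ hl23.ne').symm
  simp only [hform, hasymptote]
  have hc : 0 < 1 + P1 * lam13 / N3 := by positivity
  have ha : 0 < P1 * lam12 * lam23 := by positivity
  have hb : 0 < N2 * lam23 := by positivity
  have hd : 0 < P1 * (lam13 * N2 + lam12 * N3) + N2 * N3 := by positivity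
  have hmaps : MapsTo (fun x => P1 * lam12 * lam23 * x /
      (P1 * (lam13 * N2 + lam12 * N3) + N2 * N3 + N2 * lam23 * x)) (Ioi 0) (Ici 0) :=
    fun x hx => mem_Ici.mpr (by have := mem_Ioi.mp hx; positivity)
  refine ⟨?_, fun P2 hP2 => ?_, ?_⟩
  · exact (strictMonoOn_half_mul_log_add hc).comp
      ((strictMonoOn_mul_div_add ha hb.le hd).mono Ioi_subset_Ici_self) hmaps
  · exact strictMonoOn_half_mul_log_add hc (hmaps hP2) (mem_Ici.mpr (by positivity))
      (mul_div_add_lt_div ha hb hd hP2.le)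
  · have hlog : ContinuousAt (fun y => 1 / 2 * Real.log (1 + P1 * lam13 / N3 + y))
        (P1 * lam12 * lam23 / (N2 * lam23)) :=
      continuousAt_const.mul ((Real.continuousAt_log (by positivity)).comp
        (continuousAt_const.add continuousAt_id))
    exact hlog.tendsto.comp (tendsto_mul_div_add_atTop hb)
end

section
/- Let P1, P2, λ12, λ13, N2, N3 be positive reals and define, for λ23 > 0, R_CF(λ23) = (1/2)·log(1 + P1·λ13/N3 + P1·P2·λ12·λ23/(P1·(λ13·N2 + λ12·N3) + P2·λ23·N2 + N2·N3)). Then R_CF(λ23) < (1/2)·log(1 + P1·λ13/N3 + P1·λ12/N2) for every λ23 > 0, and R_CF(λ23) → (1/2)·log(1 + P1·λ13/N3 + P1·λ12/N2) as λ23 → ∞. -/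
open Filter Topology

/-
With `a = P1 P2 λ12`, `b = P1 (λ13 N2 + λ12 N3) + N2 N3` and `c = P2 N2`, the relay's
contribution to the compress-and-forward rate is `a λ23 / (b + c λ23)`. Since `b > 0` this is
strictly below `a / c = P1 λ12 / N2` and tends to it as `λ23 → ∞`; both facts pass through the
strictly increasing, continuous map `t ↦ (1/2) log (1 + P1 λ13 / N3 + t)`.
-/

theorem mul_div_add_mul_lt_div {a b c x : ℝ} (ha : 0 < a) (hb : 0 < b) (hc : 0 < c)
    (hx : 0 ≤ x) : a * x / (b + c * x) < a / c := by
  rw [div_lt_div_iff₀ (by positivity) hc]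
  nlinarith [mul_pos ha hb]

theorem tendsto_mul_div_add_mul_atTop (a b : ℝ) {c : ℝ} (hc : c ≠ 0) :
    Tendsto (fun x => a * x / (b + c * x)) atTop (𝓝 (a / c)) := by
  have h : Tendsto (fun x => a / (b * x⁻¹ + c)) atTop (𝓝 (a / (b * 0 + c))) :=
    tendsto_const_nhds.div ((tendsto_inv_atTop_zero.const_mul b).add_const c) (by simpa)
  rw [mul_zero, zero_add] at h
  refine h.congr' ?_
  filter_upwards [eventually_gt_atTop 0] with x hx
  field_simp

/-- As a function of the relay-destination gain `λ23`, the
compress-and-forward rate `R_CF(λ23)` is strictly below the broadcast cut-set bound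
`(1/2)log(1 + P1λ13/N3 + P1λ12/N2)` for every `λ23 > 0`, and converges to that bound
as `λ23 → ∞`. -/
theorem stmt8 (P1 P2 lam12 lam13 N2 N3 : ℝ)
    (hP1 : 0 < P1) (hP2 : 0 < P2) (hl12 : 0 < lam12) (hl13 : 0 < lam13)
    (hN2 : 0 < N2) (hN3 : 0 < N3) :
    (∀ lam23 : ℝ, 0 < lam23 →
      (1 / 2) * Real.log (1 + P1 * lam13 / N3 +
          P1 * P2 * lam12 * lam23 /
            (P1 * (lam13 * N2 + lam12 * N3) + P2 * lam23 * N2 + N2 * N3))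
        < (1 / 2) * Real.log (1 + P1 * lam13 / N3 + P1 * lam12 / N2)) ∧
    Filter.Tendsto (fun lam23 : ℝ => (1 / 2) * Real.log (1 + P1 * lam13 / N3 +
        P1 * P2 * lam12 * lam23 /
          (P1 * (lam13 * N2 + lam12 * N3) + P2 * lam23 * N2 + N2 * N3)))
      Filter.atTop
      (nhds ((1 / 2) * Real.log (1 + P1 * lam13 / N3 + P1 * lam12 / N2))) := by
  have relay_gain (x : ℝ) : P1 * P2 * lam12 * x /
      (P1 * (lam13 * N2 + lam12 * N3) + P2 * x * N2 + N2 * N3) =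
      P1 * P2 * lam12 * x / ((P1 * (lam13 * N2 + lam12 * N3) + N2 * N3) + P2 * N2 * x) := by
    ring
  have relay_limit : P1 * P2 * lam12 / (P2 * N2) = P1 * lam12 / N2 := by
    field_simp
  simp only [relay_gain, ← relay_limit]
  refine ⟨fun x hx => ?_, ?_⟩
  · have relay_lt := mul_div_add_mul_lt_div (x := x) (by positivity : 0 < P1 * P2 * lam12)
      (by positivity : 0 < P1 * (lam13 * N2 + lam12 * N3) + N2 * N3)
      (by positivity : 0 < P2 * N2) hx.le
    gcongr
  · exact ((tendsto_const_nhds.add (tendsto_mul_div_add_mul_atTop _ _ (by positivity))).log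
      (by positivity)).const_mul _
end

section
/- Let P1, P2, λ12, λ13, λ23, N2, N3 be positive reals, and define for α ∈ [0,1]: f(α) = (1/2)·log(1 + (P1·λ13/N3 + P1·λ12/N2)·(1 − α)) and g(α) = (1/2)·log(1 + P1·λ13/N3 + P2·λ23/N3 + 2·√(α·λ13·λ23·P1·P2)/N3). If P2·λ23/N3 ≥ P1·λ12/N2, then sup_{α∈[0,1]} min{f(α), g(α)} = f(0) = (1/2)·log(1 + P1·λ13/N3 + P1·λ12/N2), attained at α = 0. -/
/-- If `P2λ23/N3 ≥ P1λ12/N2` then the cut-set bound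
`sup_{α∈[0,1]} min{f(α), g(α)}` equals the broadcast-cut value
`f(0) = (1/2)log(1 + P1λ13/N3 + P1λ12/N2)` and is attained at `α = 0`, where
`f(α) = (1/2)log(1 + (P1λ13/N3 + P1λ12/N2)(1−α))` and
`g(α) = (1/2)log(1 + P1λ13/N3 + P2λ23/N3 + 2√(αλ13λ23P1P2)/N3)`. -/
theorem stmt9 (P1 P2 lam12 lam13 lam23 N2 N3 : ℝ)
    (hP1 : 0 < P1) (hP2 : 0 < P2) (hl12 : 0 < lam12) (hl13 : 0 < lam13)
    (hl23 : 0 < lam23) (hN2 : 0 < N2) (hN3 : 0 < N3)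
    (h : P1 * lam12 / N2 ≤ P2 * lam23 / N3) :
    (∀ α ∈ Set.Icc (0 : ℝ) 1,
      min ((1 / 2) * Real.log (1 + (P1 * lam13 / N3 + P1 * lam12 / N2) * (1 - α)))
          ((1 / 2) * Real.log (1 + P1 * lam13 / N3 + P2 * lam23 / N3 +
            2 * Real.sqrt (α * lam13 * lam23 * P1 * P2) / N3))
        ≤ (1 / 2) * Real.log (1 + P1 * lam13 / N3 + P1 * lam12 / N2)) ∧
    min ((1 / 2) * Real.log (1 + (P1 * lam13 / N3 + P1 * lam12 / N2) * (1 - (0 : ℝ))))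
        ((1 / 2) * Real.log (1 + P1 * lam13 / N3 + P2 * lam23 / N3 +
          2 * Real.sqrt ((0 : ℝ) * lam13 * lam23 * P1 * P2) / N3))
      = (1 / 2) * Real.log (1 + P1 * lam13 / N3 + P1 * lam12 / N2) := by
  have ha : 0 < P1 * lam13 / N3 := by positivity
  have hb : 0 < P1 * lam12 / N2 := by positivity
  have heq : 1 + (P1 * lam13 / N3 + P1 * lam12 / N2) = 1 + P1 * lam13 / N3 + P1 * lam12 / N2 := by
    ring
  constructor
  · intro α hα
    obtain ⟨h0, h1⟩ := hα
    refine le_trans (min_le_left _ _) ?_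
    have hle : 1 + (P1 * lam13 / N3 + P1 * lam12 / N2) * (1 - α)
        ≤ 1 + (P1 * lam13 / N3 + P1 * lam12 / N2) := by
      nlinarith
    have hpos2 : (0:ℝ) < 1 + (P1 * lam13 / N3 + P1 * lam12 / N2) * (1 - α) := by nlinarith
    have hlog := Real.log_le_log hpos2 hle
    rw [heq] at hlog
    linarith
  · simp only [zero_mul, Real.sqrt_zero, sub_zero, mul_one, mul_zero, zero_div, add_zero]
    rw [heq, min_eq_left]
    have hpos : (0:ℝ) < 1 + P1 * lam13 / N3 + P1 * lam12 / N2 := by positivity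
    have hle2 : 1 + P1 * lam13 / N3 + P1 * lam12 / N2
        ≤ 1 + P1 * lam13 / N3 + P2 * lam23 / N3 := by linarith
    have hlog := Real.log_le_log hpos hle2
    linarith
end

section
/- Let P1, P2, λ12, λ13, λ23, N2, N3 be positive reals, and define for α ∈ [0,1]: h(α) = (1/2)·log(1 + P1·λ12·(1 − α)/N2) and g(α) = (1/2)·log(1 + P1·λ13/N3 + P2·λ23/N3 + 2·√(α·λ13·λ23·P1·P2)/N3). If P1·λ13/N3 + P2·λ23/N3 ≥ P1·λ12/N2, then: (a) sup_{α∈[0,1]} min{h(α), g(α)} = h(0) = (1/2)·log(1 + P1·λ12/N2); and (b) the gap (1/2)·log(1 + P1·λ13/N3 + P1·λ12/N2) − (1/2)·log(1 + P1·λ12/N2) is strictly positive and does not depend on P2. -/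
open Real

/-! For `α ∈ [0, 1]` the relay link rate `h α` is at most `h 0`, so the minimum is too; at `α = 0`
the hypothesis says exactly that the multiple-access rate `g 0` dominates `h 0`, so the minimum is
attained there. The gap to the cut-set bound is `(1/2) log` of a ratio exceeding `1` by a term
`P1 λ13 / N3` in which the relay power does not occur. -/

lemma half_log_one_add_le_half_log_one_add {a b : ℝ} (ha : 0 ≤ a) (hab : a ≤ b) :
    1 / 2 * log (1 + a) ≤ 1 / 2 * log (1 + b) := by
  gcongr

lemma half_log_one_add_lt_half_log_one_add {a b : ℝ} (ha : 0 ≤ a) (hab : a < b) :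
    1 / 2 * log (1 + a) < 1 / 2 * log (1 + b) := by
  gcongr

lemma mul_one_sub_div_mem_Icc {c N α : ℝ} (hc : 0 ≤ c) (hN : 0 ≤ N) (hα : α ∈ Set.Icc (0 : ℝ) 1) :
    c * (1 - α) / N ∈ Set.Icc 0 (c / N) := by
  have h1α : 0 ≤ 1 - α := sub_nonneg.2 hα.2
  refine ⟨by positivity, ?_⟩
  gcongr
  exact mul_le_of_le_one_right hc (sub_le_self _ hα.1)

theorem stmt10_general (P1 P2 lam12 lam13 lam23 N2 N3 : ℝ)
    (hP1 : 0 < P1) (hl12 : 0 < lam12) (hl13 : 0 < lam13)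
    (hN2 : 0 < N2) (hN3 : 0 < N3)
    (h : P1 * lam12 / N2 ≤ P1 * lam13 / N3 + P2 * lam23 / N3) :
    ((∀ α ∈ Set.Icc (0 : ℝ) 1,
      min ((1 / 2) * Real.log (1 + P1 * lam12 * (1 - α) / N2))
          ((1 / 2) * Real.log (1 + P1 * lam13 / N3 + P2 * lam23 / N3 +
            2 * Real.sqrt (α * lam13 * lam23 * P1 * P2) / N3))
        ≤ (1 / 2) * Real.log (1 + P1 * lam12 / N2)) ∧
    min ((1 / 2) * Real.log (1 + P1 * lam12 * (1 - (0 : ℝ)) / N2))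
        ((1 / 2) * Real.log (1 + P1 * lam13 / N3 + P2 * lam23 / N3 +
          2 * Real.sqrt ((0 : ℝ) * lam13 * lam23 * P1 * P2) / N3))
      = (1 / 2) * Real.log (1 + P1 * lam12 / N2)) ∧
    0 < (1 / 2) * Real.log (1 + P1 * lam13 / N3 + P1 * lam12 / N2)
        - (1 / 2) * Real.log (1 + P1 * lam12 / N2) := by
  have hc : 0 ≤ P1 * lam12 := by positivity
  have hrelay : 0 ≤ P1 * lam12 / N2 := by positivity
  have hdirect : 0 < P1 * lam13 / N3 := by positivity
  refine ⟨⟨fun α hα => ?_, ?_⟩, ?_⟩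
  · obtain ⟨hnonneg, hle⟩ := mul_one_sub_div_mem_Icc hc hN2.le hα
    exact (min_le_left _ _).trans (half_log_one_add_le_half_log_one_add hnonneg hle)
  · simp only [sub_zero, mul_one, zero_mul, sqrt_zero, mul_zero, zero_div, add_zero]
    rw [add_assoc 1]
    exact min_eq_left (half_log_one_add_le_half_log_one_add hrelay h)
  · rw [sub_pos, add_assoc, add_comm (P1 * lam13 / N3)]
    exact half_log_one_add_lt_half_log_one_add hrelay (lt_add_of_pos_right _ hdirect)

/-- If `P1λ13/N3 + P2λ23/N3 ≥ P1λ12/N2` then the decode-and-forward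
rate `sup_{α∈[0,1]} min{h(α), g(α)}` equals `h(0) = (1/2)log(1 + P1λ12/N2)` (attained
at `α = 0`), and the gap between the broadcast cut-set bound
`(1/2)log(1 + P1λ13/N3 + P1λ12/N2)` and `(1/2)log(1 + P1λ12/N2)` is strictly positive
(and manifestly independent of `P2`). -/
theorem stmt10 (P1 P2 lam12 lam13 lam23 N2 N3 : ℝ)
    (hP1 : 0 < P1) (hP2 : 0 < P2) (hl12 : 0 < lam12) (hl13 : 0 < lam13)
    (hl23 : 0 < lam23) (hN2 : 0 < N2) (hN3 : 0 < N3)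
    (h : P1 * lam12 / N2 ≤ P1 * lam13 / N3 + P2 * lam23 / N3) :
    ((∀ α ∈ Set.Icc (0 : ℝ) 1,
      min ((1 / 2) * Real.log (1 + P1 * lam12 * (1 - α) / N2))
          ((1 / 2) * Real.log (1 + P1 * lam13 / N3 + P2 * lam23 / N3 +
            2 * Real.sqrt (α * lam13 * lam23 * P1 * P2) / N3))
        ≤ (1 / 2) * Real.log (1 + P1 * lam12 / N2)) ∧
    min ((1 / 2) * Real.log (1 + P1 * lam12 * (1 - (0 : ℝ)) / N2))
        ((1 / 2) * Real.log (1 + P1 * lam13 / N3 + P2 * lam23 / N3 +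
          2 * Real.sqrt ((0 : ℝ) * lam13 * lam23 * P1 * P2) / N3))
      = (1 / 2) * Real.log (1 + P1 * lam12 / N2)) ∧
    0 < (1 / 2) * Real.log (1 + P1 * lam13 / N3 + P1 * lam12 / N2)
        - (1 / 2) * Real.log (1 + P1 * lam12 / N2) :=
  stmt10_general P1 P2 lam12 lam13 lam23 N2 N3 hP1 hl12 hl13 hN2 hN3 h
end

section
/- Let P1, λ13, λ23, N2, N3 be positive reals, and let (λ12(n)) and (P2(n)) be sequences of positive reals with λ12(n) → ∞ and P2(n)/λ12(n) → ∞ as n → ∞. Define R_CF(n) = (1/2)·log(1 + P1·λ13/N3 + P1·P2(n)·λ12(n)·λ23/(P1·(λ13·N2 + λ12(n)·N3) + P2(n)·λ23·N2 + N2·N3)) and B(n) = (1/2)·log(1 + P1·λ13/N3 + P1·λ12(n)/N2). Then B(n) − R_CF(n) → 0 as n → ∞ (and R_CF(n) < B(n) for all n). -/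
/-!
Write `B = ½ log (a + y)` and `R_CF = ½ log (a + x)` with `a = 1 + P1 λ13 / N3`,
`y = P1 λ12 / N2` and `x` the compress-and-forward SNR term. Then `0 < x < y`, and by
`log t ≤ t - 1` the gap is at most `½ (y - x) / x`. This relative gap equals
`(P1 λ13 N2 + P1 λ12 N3 + N2 N3) / (N2 λ23 P2)`, which tends to `0` because `P2 → ∞`
and `λ12 / P2 → 0`.
-/

open Filter Topology

lemma Real.log_add_sub_log_add_le {a x y : ℝ} (ha : 0 ≤ a) (hx : 0 < x) (hxy : x ≤ y) :
    Real.log (a + y) - Real.log (a + x) ≤ (y - x) / x := by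
  have hax : 0 < a + x := by positivity
  have hay : 0 < a + y := by linarith
  rw [← Real.log_div hay.ne' hax.ne']
  calc Real.log ((a + y) / (a + x)) ≤ (a + y) / (a + x) - 1 :=
        Real.log_le_sub_one_of_pos (div_pos hay hax)
    _ = (y - x) / (a + x) := by field_simp; ring
    _ ≤ (y - x) / x := by gcongr; linarith

lemma Real.tendsto_log_add_sub_log_add {ι : Type*} {l : Filter ι} {a : ℝ} {x y : ι → ℝ}
    (ha : 0 ≤ a) (hx : ∀ i, 0 < x i) (hxy : ∀ i, x i ≤ y i)
    (hgap : Tendsto (fun i => (y i - x i) / x i) l (𝓝 0)) :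
    Tendsto (fun i => Real.log (a + y i) - Real.log (a + x i)) l (𝓝 0) := by
  refine tendsto_of_tendsto_of_tendsto_of_le_of_le tendsto_const_nhds hgap (fun i => ?_)
    (fun i => Real.log_add_sub_log_add_le ha (hx i) (hxy i))
  have hax : 0 < a + x i := by linarith [hx i]
  exact sub_nonneg.2 (Real.log_le_log hax (by linarith [hxy i]))

section Relay

variable {P1 P2 lam12 lam13 lam23 N2 N3 : ℝ}

/-- `R_CF = ½ log (1 + P1 λ13 / N3 + cfSNR)`. -/
noncomputable def cfSNR (P1 P2 lam12 lam13 lam23 N2 N3 : ℝ) : ℝ :=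
  P1 * P2 * lam12 * lam23 /
    (P1 * (lam13 * N2 + lam12 * N3) + P2 * lam23 * N2 + N2 * N3)

variable (hP1 : 0 < P1) (hP2 : 0 < P2) (hl12 : 0 < lam12) (hl13 : 0 < lam13)
  (hl23 : 0 < lam23) (hN2 : 0 < N2) (hN3 : 0 < N3)
include hP1 hP2 hl12 hl13 hl23 hN2 hN3

lemma cfSNR_pos : 0 < cfSNR P1 P2 lam12 lam13 lam23 N2 N3 := by
  unfold cfSNR; positivity

lemma cfSNR_lt : cfSNR P1 P2 lam12 lam13 lam23 N2 N3 < P1 * lam12 / N2 := by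
  unfold cfSNR
  rw [div_lt_div_iff₀ (by positivity) hN2]
  nlinarith [mul_pos (mul_pos hP1 hl12)
    (by positivity : 0 < P1 * lam13 * N2 + P1 * lam12 * N3 + N2 * N3)]

lemma sub_cfSNR_div_cfSNR :
    (P1 * lam12 / N2 - cfSNR P1 P2 lam12 lam13 lam23 N2 N3) /
        cfSNR P1 P2 lam12 lam13 lam23 N2 N3 =
      (P1 * lam13 + N3) / lam23 * P2⁻¹ + P1 * N3 / (N2 * lam23) * (lam12 / P2) := by
  unfold cfSNR
  field_simp
  ring

end Relay

/-- If `λ12(n) → ∞` and `P2(n)/λ12(n) → ∞`, then the gap between the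
broadcast cut-set bound `B(n)` and the compress-and-forward rate `R_CF(n)` tends to
`0` (and `R_CF(n) < B(n)` for all `n`). -/
theorem stmt12 (P1 lam13 lam23 N2 N3 : ℝ)
    (hP1 : 0 < P1) (hl13 : 0 < lam13) (hl23 : 0 < lam23)
    (hN2 : 0 < N2) (hN3 : 0 < N3)
    (lam12 P2 : ℕ → ℝ) (hl12pos : ∀ n, 0 < lam12 n) (hP2pos : ∀ n, 0 < P2 n)
    (hl12 : Filter.Tendsto lam12 Filter.atTop Filter.atTop)
    (hratio : Filter.Tendsto (fun n => P2 n / lam12 n) Filter.atTop Filter.atTop) :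
    Filter.Tendsto
      (fun n =>
        (1 / 2) * Real.log (1 + P1 * lam13 / N3 + P1 * lam12 n / N2)
          - (1 / 2) * Real.log (1 + P1 * lam13 / N3 +
              P1 * P2 n * lam12 n * lam23 /
                (P1 * (lam13 * N2 + lam12 n * N3) + P2 n * lam23 * N2 + N2 * N3)))
      Filter.atTop (nhds 0) ∧
    ∀ n,
      (1 / 2) * Real.log (1 + P1 * lam13 / N3 +
          P1 * P2 n * lam12 n * lam23 /
            (P1 * (lam13 * N2 + lam12 n * N3) + P2 n * lam23 * N2 + N2 * N3))
        < (1 / 2) * Real.log (1 + P1 * lam13 / N3 + P1 * lam12 n / N2) := by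
  have hP2top : Tendsto P2 atTop atTop :=
    (hratio.atTop_mul_atTop₀ hl12).congr fun n => div_mul_cancel₀ _ (hl12pos n).ne'
  have hl12P2 : Tendsto (fun n => lam12 n / P2 n) atTop (𝓝 0) :=
    hratio.inv_tendsto_atTop.congr fun n => inv_div _ _
  have hgap : Tendsto (fun n => (P1 * lam12 n / N2 - cfSNR P1 (P2 n) (lam12 n) lam13 lam23 N2 N3) /
      cfSNR P1 (P2 n) (lam12 n) lam13 lam23 N2 N3) atTop (𝓝 0) := by
    simp only [sub_cfSNR_div_cfSNR hP1 (hP2pos _) (hl12pos _) hl13 hl23 hN2 hN3]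
    simpa using (hP2top.inv_tendsto_atTop.const_mul _).add (hl12P2.const_mul _)
  constructor
  · simpa [← mul_sub, cfSNR] using ((Real.tendsto_log_add_sub_log_add (by positivity)
      (fun n => cfSNR_pos hP1 (hP2pos n) (hl12pos n) hl13 hl23 hN2 hN3)
      (fun n => (cfSNR_lt hP1 (hP2pos n) (hl12pos n) hl13 hl23 hN2 hN3).le) hgap).const_mul
        (1 / 2 : ℝ))
  · intro n
    have hlt := cfSNR_lt hP1 (hP2pos n) (hl12pos n) hl13 hl23 hN2 hN3
    have hpos := cfSNR_pos hP1 (hP2pos n) (hl12pos n) hl13 hl23 hN2 hN3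
    unfold cfSNR at hlt hpos
    gcongr
end

section
/- Let P1, λ13, λ23, N2, N3 be positive reals, and let (λ12(n)) and (P2(n)) be sequences of positive reals with λ12(n) → ∞, P2(n) → ∞, and P2(n)/λ12(n) → 0 as n → ∞. Define R_CF(n) = (1/2)·log(1 + P1·λ13/N3 + P1·P2(n)·λ12(n)·λ23/(P1·(λ13·N2 + λ12(n)·N3) + P2(n)·λ23·N2 + N2·N3)), and U(n) = (1/2)·log(1 + (√(P1·λ13) + √(P2(n)·λ23))²/N3). Then: (a) for all positive parameter values, min over α ∈ [0,1] of the two cut rates f(α) = (1/2)·log(1 + (P1λ13/N3 + P1λ12/N2)(1−α)) and g(α) = (1/2)·log(1 + P1λ13/N3 + P2λ23/N3 + 2√(αλ13λ23P1P2)/N3) satisfies R_CF ≤ sup_{α∈[0,1]} min{f(α), g(α)} ≤ U; and (b) U(n) − R_CF(n) → 0 as n → ∞. -/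
/-! In signal-to-noise form the compress-and-forward rate is `½ log (1 + s + ab / (1 + s + a + b))`,
whose correction term `ab / (1 + s + a + b)` is below both `a` and `b`; hence it is below both cuts
at `α = 0`, while every cut-set value is below the envelope since `α ≤ 1`. When `a, b → ∞` with
`b / a → 0`, so that `a / (1 + s + a + b) → 1`, both the envelope argument
`1 + s + b + 2√(sb)` and the compress-and-forward argument are `b (1 + o(1))`, so the logarithms
differ by `o(1)`. -/

open Real Filter Topology Set

/- The rates are written in terms of the signal-to-noise ratios of the three links:
`s = P1λ13/N3` (source–destination), `a = P1λ12/N2` (source–relay), `b = P2λ23/N3`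
(relay–destination). -/

noncomputable def cfRate (s a b : ℝ) : ℝ :=
  1 / 2 * log (1 + s + a * b / (1 + s + a + b))

noncomputable def cutSetMin (s a b α : ℝ) : ℝ :=
  min (1 / 2 * log (1 + (s + a) * (1 - α))) (1 / 2 * log (1 + s + b + 2 * √(α * (s * b))))

noncomputable def envelopeRate (s b : ℝ) : ℝ :=
  1 / 2 * log (1 + s + b + 2 * √(s * b))

section CutSet

variable {s a b : ℝ}

lemma mul_div_add_le_left {c : ℝ} (ha : 0 ≤ a) (hb : 0 ≤ b) (hc : 0 < c) :
    a * b / (c + a + b) ≤ a := by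
  rw [div_le_iff₀ (by positivity)]
  nlinarith [mul_nonneg ha ha, mul_nonneg ha hc.le]

lemma mul_div_add_le_right {c : ℝ} (ha : 0 ≤ a) (hb : 0 ≤ b) (hc : 0 < c) :
    a * b / (c + a + b) ≤ b := by
  rw [div_le_iff₀ (by positivity)]
  nlinarith [mul_nonneg hb hb, mul_nonneg hb hc.le]

lemma cfRate_le_cutSetMin_zero (hs : 0 ≤ s) (ha : 0 ≤ a) (hb : 0 ≤ b) :
    cfRate s a b ≤ cutSetMin s a b 0 := by
  have hc : (0 : ℝ) < 1 + s := by linarith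
  unfold cfRate cutSetMin
  refine le_min ?_ ?_
  · gcongr 1 / 2 * log ?_
    linarith [mul_div_add_le_left ha hb hc]
  · gcongr 1 / 2 * log ?_
    simp only [zero_mul, sqrt_zero, mul_zero, add_zero]
    linarith [mul_div_add_le_right ha hb hc]

lemma cutSetMin_le_envelopeRate (hs : 0 ≤ s) (hb : 0 ≤ b) {α : ℝ} (hα : α ≤ 1) :
    cutSetMin s a b α ≤ envelopeRate s b := by
  refine (min_le_right _ _).trans ?_
  unfold envelopeRate
  gcongr 1 / 2 * log (1 + s + b + 2 * √?_)
  nlinarith [mul_nonneg hs hb]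

lemma cfRate_le_sSup_cutSetMin_le_envelopeRate (hs : 0 ≤ s) (ha : 0 ≤ a) (hb : 0 ≤ b) :
    cfRate s a b ≤ sSup (cutSetMin s a b '' Icc 0 1) ∧
      sSup (cutSetMin s a b '' Icc 0 1) ≤ envelopeRate s b := by
  have hle : ∀ y ∈ cutSetMin s a b '' Icc 0 1, y ≤ envelopeRate s b := by
    rintro _ ⟨α, hα, rfl⟩
    exact cutSetMin_le_envelopeRate hs hb hα.2
  have h0 : cutSetMin s a b 0 ∈ cutSetMin s a b '' Icc 0 1 :=
    mem_image_of_mem _ ⟨le_rfl, zero_le_one⟩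
  exact ⟨le_csSup_of_le ⟨_, hle⟩ h0 (cfRate_le_cutSetMin_zero hs ha hb),
    csSup_le ⟨_, h0⟩ hle⟩

end CutSet

section Asymptotics

variable {ι : Type*} {l : Filter ι}

lemma tendsto_log_sub_log_of_tendsto_div {u v w : ι → ℝ}
    (hu : Tendsto (fun i => u i / w i) l (𝓝 1)) (hv : Tendsto (fun i => v i / w i) l (𝓝 1)) :
    Tendsto (fun i => log (u i) - log (v i)) l (𝓝 0) := by
  have h := (hu.log one_ne_zero).sub (hv.log one_ne_zero)
  rw [log_one, sub_self] at h
  refine h.congr' ?_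
  filter_upwards [hu.eventually_ne one_ne_zero, hv.eventually_ne one_ne_zero] with i hui hvi
  obtain ⟨hui, hwi⟩ := div_ne_zero_iff.mp hui
  rw [log_div hui hwi, log_div (div_ne_zero_iff.mp hvi).1 hwi]
  ring

lemma tendsto_envelopeRate_sub_cfRate (s : ℝ) {a b : ι → ℝ} (ha : Tendsto a l atTop)
    (hb : Tendsto b l atTop) (hba : Tendsto (fun i => b i / a i) l (𝓝 0)) :
    Tendsto (fun i => envelopeRate s (b i) - cfRate s (a i) (b i)) l (𝓝 0) := by
  have hinv_b : Tendsto (fun i => (1 + s) / b i) l (𝓝 0) := tendsto_const_nhds.div_atTop hb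
  have hinv_a : Tendsto (fun i => (1 + s) / a i) l (𝓝 0) := tendsto_const_nhds.div_atTop ha
  have henv : Tendsto (fun i => (1 + s + b i + 2 * √(s * b i)) / b i) l (𝓝 1) := by
    have h := (hinv_b.add_const 1).add
      (((tendsto_const_nhds (x := s)).div_atTop hb).sqrt.const_mul 2)
    rw [zero_add, sqrt_zero, mul_zero, add_zero] at h
    refine h.congr' ?_
    filter_upwards [hb.eventually_gt_atTop 0] with i hbi
    rw [show s / b i = s * b i / (b i * b i) by field_simp, sqrt_div' _ (by positivity),
      sqrt_mul_self hbi.le]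
    field_simp
  have hcf : Tendsto (fun i => (1 + s + a i * b i / (1 + s + a i + b i)) / b i) l (𝓝 1) := by
    have h := hinv_b.add (((hinv_a.add_const 1).add hba).inv₀ (by norm_num))
    rw [zero_add, zero_add, add_zero, inv_one] at h
    refine h.congr' ?_
    filter_upwards [ha.eventually_gt_atTop (max 0 (-(1 + s))), hb.eventually_gt_atTop 0]
      with i hai hbi
    have hai' : 0 < a i := (le_max_left _ _).trans_lt hai
    have hden : 1 + s + a i + b i ≠ 0 := by linarith [(le_max_right 0 (-(1 + s))).trans_lt hai]
    field_simp
  have h := (tendsto_log_sub_log_of_tendsto_div henv hcf).const_mul (1 / 2)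
  rw [mul_zero] at h
  refine h.congr fun i => ?_
  unfold envelopeRate cfRate
  ring

end Asymptotics

lemma sq_sqrt_add_sqrt_div {x y N : ℝ} (hx : 0 ≤ x) (hy : 0 ≤ y) (hN : 0 ≤ N) :
    (√x + √y) ^ 2 / N = x / N + y / N + 2 * √(x / N * (y / N)) := by
  rw [div_mul_div_comm, sqrt_div' _ (mul_self_nonneg N), sqrt_mul_self hN, add_sq,
    sq_sqrt hx, sq_sqrt hy, sqrt_mul hx]
  ring

lemma sqrt_mul_mul_div {c x y N : ℝ} (hN : 0 ≤ N) :
    √(c * x * y) / N = √(c * (x / N * (y / N))) := by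
  rw [show c * (x / N * (y / N)) = c * x * y / (N * N) by ring, sqrt_div' _ (mul_self_nonneg N),
    sqrt_mul_self hN]

/-- With `λ12(n) → ∞`, `P2(n) → ∞`, `P2(n)/λ12(n) → 0`: (a) the
compress-and-forward rate `R_CF(n)` is below the cut-set bound
`sup_{α∈[0,1]} min{f(α), g(α)}`, which in turn is below the envelope
`U(n) = (1/2)log(1 + (√(P1λ13) + √(P2(n)λ23))²/N3)`; and (b) `U(n) − R_CF(n) → 0`. -/
theorem stmt13 (P1 lam13 lam23 N2 N3 : ℝ)
    (hP1 : 0 < P1) (hl13 : 0 < lam13) (hl23 : 0 < lam23)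
    (hN2 : 0 < N2) (hN3 : 0 < N3)
    (lam12 P2 : ℕ → ℝ) (hl12pos : ∀ n, 0 < lam12 n) (hP2pos : ∀ n, 0 < P2 n)
    (hl12 : Filter.Tendsto lam12 Filter.atTop Filter.atTop)
    (hP2 : Filter.Tendsto P2 Filter.atTop Filter.atTop)
    (hratio : Filter.Tendsto (fun n => P2 n / lam12 n) Filter.atTop (nhds 0)) :
    (∀ n,
      (1 / 2) * Real.log (1 + P1 * lam13 / N3 +
          P1 * P2 n * lam12 n * lam23 /
            (P1 * (lam13 * N2 + lam12 n * N3) + P2 n * lam23 * N2 + N2 * N3))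
        ≤ sSup ((fun α : ℝ =>
            min ((1 / 2) * Real.log
                  (1 + (P1 * lam13 / N3 + P1 * lam12 n / N2) * (1 - α)))
                ((1 / 2) * Real.log (1 + P1 * lam13 / N3 + P2 n * lam23 / N3 +
                  2 * Real.sqrt (α * lam13 * lam23 * P1 * P2 n) / N3)))
            '' Set.Icc (0 : ℝ) 1) ∧
      sSup ((fun α : ℝ =>
            min ((1 / 2) * Real.log
                  (1 + (P1 * lam13 / N3 + P1 * lam12 n / N2) * (1 - α)))
                ((1 / 2) * Real.log (1 + P1 * lam13 / N3 + P2 n * lam23 / N3 +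
                  2 * Real.sqrt (α * lam13 * lam23 * P1 * P2 n) / N3)))
            '' Set.Icc (0 : ℝ) 1)
        ≤ (1 / 2) * Real.log
            (1 + (Real.sqrt (P1 * lam13) + Real.sqrt (P2 n * lam23)) ^ 2 / N3)) ∧
    Filter.Tendsto
      (fun n =>
        (1 / 2) * Real.log
            (1 + (Real.sqrt (P1 * lam13) + Real.sqrt (P2 n * lam23)) ^ 2 / N3)
          - (1 / 2) * Real.log (1 + P1 * lam13 / N3 +
              P1 * P2 n * lam12 n * lam23 /
                (P1 * (lam13 * N2 + lam12 n * N3) + P2 n * lam23 * N2 + N2 * N3)))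
      Filter.atTop (nhds 0) := by
  have hcf : ∀ n, P1 * P2 n * lam12 n * lam23 /
      (P1 * (lam13 * N2 + lam12 n * N3) + P2 n * lam23 * N2 + N2 * N3) =
      P1 * lam12 n / N2 * (P2 n * lam23 / N3) /
        (1 + P1 * lam13 / N3 + P1 * lam12 n / N2 + P2 n * lam23 / N3) := fun n => by
    have := hl12pos n; have := hP2pos n
    field_simp
    ring
  have hcross : ∀ n α, 2 * √(α * lam13 * lam23 * P1 * P2 n) / N3 =
      2 * √(α * (P1 * lam13 / N3 * (P2 n * lam23 / N3))) := fun n α => by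
    rw [mul_div_assoc, ← sqrt_mul_mul_div hN3.le]
    ring_nf
  have henv : ∀ n, (√(P1 * lam13) + √(P2 n * lam23)) ^ 2 / N3 =
      P1 * lam13 / N3 + P2 n * lam23 / N3 + 2 * √(P1 * lam13 / N3 * (P2 n * lam23 / N3)) :=
    fun n => sq_sqrt_add_sqrt_div (by positivity) (mul_pos (hP2pos n) hl23).le hN3.le
  simp only [hcf, hcross, henv, ← add_assoc]
  refine ⟨fun n => cfRate_le_sSup_cutSetMin_le_envelopeRate (by positivity)
    (div_pos (mul_pos hP1 (hl12pos n)) hN2).le (div_pos (mul_pos (hP2pos n) hl23) hN3).le, ?_⟩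
  refine tendsto_envelopeRate_sub_cfRate _ ((hl12.const_mul_atTop hP1).atTop_div_const hN2)
    ((hP2.atTop_mul_const hl23).atTop_div_const hN3) ?_
  have hba := hratio.mul_const (lam23 * N2 / (N3 * P1))
  rw [zero_mul] at hba
  refine hba.congr fun n => ?_
  have := hl12pos n
  field_simp
end

section
/- Let P1, P2, λ13, λ23, N2, N3 be positive reals and define, for λ12 > 0, R_CF(λ12) = (1/2)·log(1 + P1·λ13/N3 + P1·P2·λ12·λ23/(P1·(λ13·N2 + λ12·N3) + P2·λ23·N2 + N2·N3)). Then as λ12 → ∞, R_CF(λ12) converges to the finite value (1/2)·log(1 + P1·λ13/N3 + P2·λ23/N3); in particular R_CF(λ12) remains bounded as λ12 → ∞, while the broadcast cut-set bound (1/2)·log(1 + P1·λ13/N3 + P1·λ12/N2) tends to infinity. -/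
/-! As `λ12 → ∞` the relay term `P1 P2 λ12 λ23 / (P1 N3 λ12 + const)` of the compress-and-forward
rate is a ratio of affine functions of `λ12`, so it saturates at `P2 λ23 / N3`: the relay's
description of its observation can never be sent to the destination faster than the fixed
relay–destination link allows. The cut-set bound, on the other hand, grows like `log λ12`. -/

open Filter Topology Real

theorem tendsto_affine_div_affine_atTop (a b c d : ℝ) (hc : c ≠ 0) :
    Tendsto (fun x : ℝ => (a * x + b) / (c * x + d)) atTop (𝓝 (a / c)) := by
  have hlim : Tendsto (fun x : ℝ => (a + b * x⁻¹) / (c + d * x⁻¹)) atTop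
      (𝓝 ((a + b * 0) / (c + d * 0))) :=
    ((tendsto_inv_atTop_zero.const_mul b).const_add a).div
      ((tendsto_inv_atTop_zero.const_mul d).const_add c) (by simpa using hc)
  simp only [mul_zero, add_zero] at hlim
  refine hlim.congr' ?_
  filter_upwards [eventually_ne_atTop 0] with x hx
  field_simp

theorem tendsto_compressForward_relayTerm_atTop {P1 N3 : ℝ} (P2 lam13 lam23 N2 : ℝ)
    (hP1 : P1 ≠ 0) (hN3 : N3 ≠ 0) :
    Tendsto (fun lam12 : ℝ => P1 * P2 * lam12 * lam23 /
        (P1 * (lam13 * N2 + lam12 * N3) + P2 * lam23 * N2 + N2 * N3))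
      atTop (𝓝 (P2 * lam23 / N3)) := by
  have h := tendsto_affine_div_affine_atTop (P1 * P2 * lam23) 0 (P1 * N3)
    (P1 * lam13 * N2 + P2 * lam23 * N2 + N2 * N3) (mul_ne_zero hP1 hN3)
  convert h using 2 with lam12
  · ring
  · field_simp

/-- At fixed relay power `P2`, as `λ12 → ∞`, the compress-and-forward
rate `R_CF(λ12)` converges to the finite value `(1/2)log(1 + P1λ13/N3 + P2λ23/N3)`,
while the broadcast cut-set bound `(1/2)log(1 + P1λ13/N3 + P1λ12/N2)` tends to
infinity. -/
theorem stmt14 (P1 P2 lam13 lam23 N2 N3 : ℝ)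
    (hP1 : 0 < P1) (hP2 : 0 < P2) (hl13 : 0 < lam13) (hl23 : 0 < lam23)
    (hN2 : 0 < N2) (hN3 : 0 < N3) :
    Filter.Tendsto
      (fun lam12 : ℝ => (1 / 2) * Real.log (1 + P1 * lam13 / N3 +
          P1 * P2 * lam12 * lam23 /
            (P1 * (lam13 * N2 + lam12 * N3) + P2 * lam23 * N2 + N2 * N3)))
      Filter.atTop
      (nhds ((1 / 2) * Real.log (1 + P1 * lam13 / N3 + P2 * lam23 / N3))) ∧
    Filter.Tendsto
      (fun lam12 : ℝ => (1 / 2) * Real.log (1 + P1 * lam13 / N3 + P1 * lam12 / N2))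
      Filter.atTop Filter.atTop := by
  constructor
  · have hrelay := tendsto_compressForward_relayTerm_atTop P2 lam13 lam23 N2 hP1.ne' hN3.ne'
    exact ((hrelay.const_add (1 + P1 * lam13 / N3)).log (by positivity)).const_mul (1 / 2)
  · have hsnr : Tendsto (fun lam12 : ℝ => 1 + P1 * lam13 / N3 + P1 * lam12 / N2) atTop atTop :=
      tendsto_atTop_add_const_left _ _ <|
        (tendsto_id.const_mul_atTop (div_pos hP1 hN2)).congr fun lam12 => by
          simp only [id]; ring
    exact (tendsto_log_atTop.comp hsnr).const_mul_atTop one_half_pos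
end
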